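/- arXiv:2508.10448 — 3 statements merged into one kernel-verified Lean document; each statement's English description precedes it below -/
import Mathlib

section
/- Let u be a C² nonnegative function on the closed disk of radius R in ℝ² satisfying Δu ≤ c·u (with Δ the nonnegative Laplacian, i.e. -div(∇u) ≤ c u) for a constant c > 0. Then the function r ↦ e^{(c/4)r²} · (1/r²) ∫_{D_r} u is non-decreasing on (0,R). -/
/-
Write `M(s)` for the mean of `u` over the circle of radius `s` and `F(r) = ∫₀ʳ s M(s) ds`, so that
`∫_{D_r} u = 2π F(r)`. In polar coordinates `(r∂ᵣ)² + ∂_θ² = r² Δ`, and the angular term has zero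
mean, so `G = s M'(s)` satisfies `G'(s) = s · mean(Δu) ≥ -c s M(s)` (analyst's `Δ`). Hence
`G + cF` is nondecreasing and vanishes at `0`, so it is nonnegative; this in turn makes
`ψ = r² M + (c r²/2 - 2) F` nondecreasing from `ψ(0) = 0`, and
`(e^{cr²/4} F(r) / r²)' = e^{cr²/4} ψ(r) / r³ ≥ 0`.
-/

open MeasureTheory

/-- Partial derivative in direction `i`. -/
noncomputable def pderiv2 (i : Fin 2) (f : EuclideanSpace ℝ (Fin 2) → ℝ)
    (x : EuclideanSpace ℝ (Fin 2)) : ℝ :=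
  fderiv ℝ f x (EuclideanSpace.single i 1)

/-- The analyst's Laplacian `div(∇u)` as a sum of second partial derivatives. -/
noncomputable def lap2 (f : EuclideanSpace ℝ (Fin 2) → ℝ)
    (x : EuclideanSpace ℝ (Fin 2)) : ℝ :=
  ∑ i : Fin 2, pderiv2 i (pderiv2 i f) x

open Real Set Metric Filter Topology Laplacian InnerProductSpace

lemma nonneg_of_hasDerivAt_nonneg {f f' : ℝ → ℝ} {R : ℝ} (hf : ContinuousOn f (Ico 0 R))
    (hf0 : f 0 = 0) (hf' : ∀ x ∈ Ioo 0 R, HasDerivAt f (f' x) x)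
    (hpos : ∀ x ∈ Ioo 0 R, 0 ≤ f' x) {x : ℝ} (hx : x ∈ Ico 0 R) : 0 ≤ f x := by
  have hmono : MonotoneOn f (Ico 0 R) :=
    monotoneOn_of_hasDerivWithinAt_nonneg (convex_Ico 0 R) hf
      (by simpa only [interior_Ico] using fun x hx => (hf' x hx).hasDerivWithinAt)
      (by simpa only [interior_Ico] using hpos)
  exact hf0 ▸ hmono (left_mem_Ico.2 (hx.1.trans_lt hx.2)) hx hx.1

lemma hasDerivAt_integral_of_continuousOn_Ioo {f : ℝ → ℝ} {R r : ℝ}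
    (hf : ContinuousOn f (Ioo (-R) R)) (hr : r ∈ Ioo (-R) R) :
    HasDerivAt (fun r => ∫ s in 0..r, f s) (f r) r := by
  have hsub : uIcc 0 r ⊆ Ioo (-R) R :=
    ordConnected_Ioo.uIcc_subset ⟨by linarith [hr.1, hr.2], by linarith [hr.1, hr.2]⟩ hr
  exact intervalIntegral.integral_hasDerivAt_right (hf.mono hsub).intervalIntegrable
    (hf.stronglyMeasurableAtFilter isOpen_Ioo r hr) (hf.continuousAt (isOpen_Ioo.mem_nhds hr))

lemma hasDerivAt_exp_mul_div_sq {F : ℝ → ℝ} {F' : ℝ} (c : ℝ) {r : ℝ} (hr : r ≠ 0)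
    (hF : HasDerivAt F F' r) :
    HasDerivAt (fun r => exp (c / 4 * r ^ 2) * (1 / r ^ 2 * F r))
      (exp (c / 4 * r ^ 2) / r ^ 3 * (r * F' + (c * r ^ 2 / 2 - 2) * F r)) r := by
  have := (((hasDerivAt_pow 2 r).const_mul (c / 4)).exp).fun_mul
    (((hasDerivAt_pow 2 r).fun_inv (pow_ne_zero 2 hr)).fun_mul hF)
  simp only [one_div]
  refine this.congr_deriv ?_
  field_simp
  ring

theorem monotoneOn_exp_mul_integral_div_sq {M G g : ℝ → ℝ} {c R : ℝ} (hc : 0 ≤ c)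
    (hM : ContinuousOn M (Ioo (-R) R)) (hM0 : ∀ s ∈ Ioo 0 R, 0 ≤ M s)
    (hG : ContinuousOn G (Ico 0 R)) (hG0 : G 0 = 0)
    (hM' : ∀ s ∈ Ioo 0 R, HasDerivAt M (s⁻¹ * G s) s)
    (hG' : ∀ s ∈ Ioo 0 R, HasDerivAt G (g s) s) (hg : ∀ s ∈ Ioo 0 R, -(c * s * M s) ≤ g s) :
    MonotoneOn (fun r => exp (c / 4 * r ^ 2) * (1 / r ^ 2 * ∫ s in 0..r, s * M s))
      (Ioo 0 R) := by
  set F : ℝ → ℝ := fun r => ∫ s in 0..r, s * M s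
  have hIoo : Ico 0 R ⊆ Ioo (-R) R := fun s hs => ⟨by linarith [hs.1, hs.2], hs.2⟩
  have hF : ∀ r ∈ Ioo (-R) R, HasDerivAt F (r * M r) r := fun r hr =>
    hasDerivAt_integral_of_continuousOn_Ioo (continuousOn_id.mul hM) hr
  have hF' : ∀ r ∈ Ioo 0 R, HasDerivAt F (r * M r) r := fun r hr =>
    hF r (hIoo (Ioo_subset_Ico_self hr))
  have hFc : ContinuousOn F (Ico 0 R) := fun r hr =>
    (hF r (hIoo hr)).continuousAt.continuousWithinAt
  have hη : ∀ s ∈ Ico 0 R, 0 ≤ G s + c * F s := by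
    refine fun s hs => nonneg_of_hasDerivAt_nonneg (hG.add (continuousOn_const.mul hFc))
      (by simp [hG0, F]) (fun x hx => (hG' x hx).add ((hF' x hx).const_mul c)) ?_ hs
    intro x hx
    nlinarith [hg x hx]
  have hψ : ∀ s ∈ Ico 0 R, 0 ≤ s ^ 2 * M s + (c * s ^ 2 / 2 - 2) * F s := by
    refine fun s hs => nonneg_of_hasDerivAt_nonneg
      (f := fun s => s ^ 2 * M s + (c * s ^ 2 / 2 - 2) * F s)
      (f' := fun s => s * (G s + c * F s) + c * s ^ 3 / 2 * M s) ?_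
      (by simp [F]) (fun x hx => ?_) (fun x hx => ?_) hs
    · have := hM.mono hIoo
      fun_prop
    · have hq := (((hasDerivAt_pow 2 x).const_mul c).div_const 2).sub_const 2
      refine (((hasDerivAt_pow 2 x).fun_mul (hM' x hx)).fun_add
        (hq.fun_mul (hF' x hx))).congr_deriv ?_
      have := hx.1.ne'
      field_simp
      ring
    · exact add_nonneg (mul_nonneg hx.1.le (hη x (Ioo_subset_Ico_self hx)))
        (mul_nonneg (by have := hx.1; positivity) (hM0 x hx))
  have hΦ : ∀ r ∈ Ioo 0 R, HasDerivAt (fun r => exp (c / 4 * r ^ 2) * (1 / r ^ 2 * F r))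
      (exp (c / 4 * r ^ 2) / r ^ 3 * (r ^ 2 * M r + (c * r ^ 2 / 2 - 2) * F r)) r :=
    fun r hr => by
      simpa only [← mul_assoc, ← sq] using hasDerivAt_exp_mul_div_sq c hr.1.ne' (hF' r hr)
  refine monotoneOn_of_hasDerivWithinAt_nonneg (convex_Ioo 0 R)
    (fun r hr => (hΦ r hr).continuousAt.continuousWithinAt)
    (by simpa only [interior_Ioo] using fun r hr => (hΦ r hr).hasDerivWithinAt)
    (by simpa only [interior_Ioo] using fun r hr =>
      mul_nonneg (div_nonneg (exp_pos _).le (pow_pos hr.1 3).le) (hψ r (Ioo_subset_Ico_self hr)))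

lemma hasDerivAt_intervalIntegral_of_deriv_le {F F' : ℝ → ℝ → ℝ} {s : Set ℝ} {x₀ a b C : ℝ}
    (hs : s ∈ 𝓝 x₀) (hF : ∀ x ∈ s, Continuous (F x)) (hF' : Continuous (F' x₀))
    (hdiff : ∀ x ∈ s, ∀ t, HasDerivAt (fun x => F x t) (F' x t) x)
    (hbound : ∀ x ∈ s, ∀ t, |F' x t| ≤ C) :
    HasDerivAt (fun x => ∫ t in a..b, F x t) (∫ t in a..b, F' x₀ t) x₀ :=
  (intervalIntegral.hasDerivAt_integral_of_dominated_loc_of_deriv_le (bound := fun _ => C) hs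
    (eventually_of_mem hs fun x hx => (hF x hx).aestronglyMeasurable)
    ((hF x₀ (mem_of_mem_nhds hs)).intervalIntegrable a b) hF'.aestronglyMeasurable
    (.of_forall fun t _ x hx => hbound x hx t) intervalIntegrable_const
    (.of_forall fun t _ x hx => hdiff x hx t)).2

lemma hasDerivAt_circleMap_radius (s θ : ℝ) :
    HasDerivAt (fun t => circleMap 0 t θ) (circleMap 0 1 θ) s := by
  simpa [circleMap] using (hasDerivAt_id s).ofReal_comp.mul_const (Complex.exp (θ * Complex.I))

lemma circleMap_zero_eq_smul (s θ : ℝ) : circleMap 0 s θ = s • circleMap 0 1 θ := by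
  simp [circleMap, Complex.real_smul]

theorem continuousOn_circleAverage_Ioo {w : ℂ → ℝ} {R : ℝ} (hw : ContinuousOn w (ball 0 R)) :
    ContinuousOn (circleAverage w 0) (Ioo (-R) R) := by
  have hball : {z : ℂ | ‖z - 0‖ ∈ Ico 0 R} = ball 0 R := by ext z; simp
  have hIco : ContinuousOn (circleAverage w 0) (Ico 0 R) :=
    (hball ▸ hw).circleAverage fun r hr => hr.1
  refine (hIco.comp continuous_abs.continuousOn fun x hx => ?_).congr fun x _ =>
    (circleAverage_abs_radius).symm
  exact ⟨abs_nonneg x, abs_lt.2 hx⟩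

lemma Complex.polarCoord_symm_eq_circleMap (p : ℝ × ℝ) :
    Complex.polarCoord.symm p = circleMap 0 p.1 p.2 := by
  simp [circleMap, Complex.exp_mul_I]

lemma integral_neg_pi_pi_circleMap (f : ℂ → ℝ) (c : ℂ) (R : ℝ) :
    ∫ θ in -π..π, f (circleMap c R θ) = 2 * π * circleAverage f c R := by
  have h := ((periodic_circleMap c R).comp f).intervalIntegral_add_eq (-π) 0
  rw [show -π + 2 * π = π by ring, zero_add] at h
  rw [circleAverage_def, smul_eq_mul, mul_inv_cancel_left₀ two_pi_pos.ne']
  exact h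

theorem setIntegral_ball_eq_integral_circleAverage {v : ℂ → ℝ} {r : ℝ} (hr : 0 ≤ r)
    (hv : ContinuousOn v (closedBall 0 r)) :
    ∫ z in ball 0 r, v z = 2 * π * ∫ s in 0..r, s * circleAverage v 0 s := by
  set S : Set (ℝ × ℝ) := Ioo 0 r ×ˢ Ioo (-π) π
  have hS : polarCoord.target ∩ (fun p => circleMap 0 p.1 p.2) ⁻¹' ball 0 r = S := by
    ext ⟨s, θ⟩
    simp only [polarCoord_target, mem_inter_iff, mem_prod, mem_Ioi, mem_preimage,
      mem_ball_zero_iff, norm_circleMap_zero, S, mem_Ioo]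
    constructor
    · rintro ⟨⟨hs, hθ⟩, hsr⟩
      exact ⟨⟨hs, by rwa [abs_of_pos hs] at hsr⟩, hθ⟩
    · rintro ⟨⟨hs, hsr⟩, hθ⟩
      exact ⟨⟨hs, hθ⟩, by rwa [abs_of_pos hs]⟩
  have hint : IntegrableOn (fun p : ℝ × ℝ => p.1 * v (circleMap 0 p.1 p.2)) S
      (volume.prod volume) := by
    refine (ContinuousOn.integrableOn_compact (isCompact_Icc.prod isCompact_Icc) ?_).mono_set
      (prod_mono Ioo_subset_Icc_self Ioo_subset_Icc_self)
    refine continuousOn_fst.mul (hv.comp (by fun_prop) fun p hp => ?_)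
    simpa [abs_of_nonneg hp.1.1] using hp.1.2
  calc ∫ z in ball 0 r, v z
      = ∫ p in polarCoord.target, p.1 • (ball 0 r).indicator v (circleMap 0 p.1 p.2) := by
        simp_rw [← Complex.polarCoord_symm_eq_circleMap]
        rw [Complex.integral_comp_polarCoord_symm, integral_indicator measurableSet_ball]
    _ = ∫ p in S, p.1 * v (circleMap 0 p.1 p.2) := by
        rw [← hS, ← setIntegral_indicator (measurableSet_ball.preimage (by fun_prop))]
        congr 1 with p
        by_cases hp : circleMap 0 p.1 p.2 ∈ ball 0 r <;> simp [hp]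
    _ = ∫ s in Ioo 0 r, ∫ θ in Ioo (-π) π, s * v (circleMap 0 s θ) := by
        rw [Measure.volume_eq_prod]
        exact setIntegral_prod _ hint
    _ = ∫ s in 0..r, s * ∫ θ in -π..π, v (circleMap 0 s θ) := by
        rw [intervalIntegral.integral_of_le hr, ← integral_Ioc_eq_integral_Ioo]
        refine setIntegral_congr_fun measurableSet_Ioc fun s _ => ?_
        rw [intervalIntegral.integral_of_le (by linarith [pi_pos]), integral_Ioc_eq_integral_Ioo,
          integral_const_mul]
    _ = 2 * π * ∫ s in 0..r, s * circleAverage v 0 s := by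
        simp_rw [integral_neg_pi_pi_circleMap, mul_left_comm _ (2 * π),
          intervalIntegral.integral_const_mul]

/-- The Euler operator `z · ∇`, i.e. `r ∂ᵣ` in polar coordinates. -/
noncomputable def eulerDeriv (v : ℂ → ℝ) (z : ℂ) : ℝ :=
  fderiv ℝ v z z

theorem hasDerivAt_circleAverage_radius {w : ℂ → ℝ} {R s : ℝ}
    (hw : ContDiffOn ℝ 1 w (ball 0 R)) (hs : s ∈ Ioo 0 R) :
    HasDerivAt (circleAverage w 0)
      (s⁻¹ * circleAverage (eulerDeriv w) 0 s) s := by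
  obtain ⟨r, hsr, hrR⟩ := exists_between hs.2
  have hmem : ∀ t ∈ Ioo (-r) r, ∀ θ, circleMap 0 t θ ∈ closedBall 0 r := fun t ht θ => by
    simpa [abs_le] using ⟨ht.1.le, ht.2.le⟩
  have hball : closedBall (0 : ℂ) r ⊆ ball 0 R := closedBall_subset_ball hrR
  have hDw : ContinuousOn (fderiv ℝ w) (ball 0 R) :=
    hw.continuousOn_fderiv_of_isOpen isOpen_ball le_rfl
  obtain ⟨C, hC⟩ := (isCompact_closedBall (0 : ℂ) r).exists_bound_of_continuousOn
    (hDw.mono hball)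
  have hderiv := hasDerivAt_intervalIntegral_of_deriv_le (a := 0) (b := 2 * π) (C := C)
    (F := fun t θ => w (circleMap 0 t θ))
    (F' := fun t θ => fderiv ℝ w (circleMap 0 t θ) (circleMap 0 1 θ))
    (isOpen_Ioo.mem_nhds ⟨by linarith [hs.1], hsr⟩)
    (fun t ht => hw.continuousOn.comp_continuous (continuous_circleMap 0 t)
      fun θ => hball (hmem t ht θ))
    ((hDw.comp_continuous (continuous_circleMap 0 s)
      fun θ => hball (hmem s ⟨by linarith [hs.1], hsr⟩ θ)).clm_apply (continuous_circleMap 0 1))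
    (fun t ht θ => ((hw.differentiableOn one_ne_zero).differentiableAt
      (isOpen_ball.mem_nhds (hball (hmem t ht θ)))).hasFDerivAt.comp_hasDerivAt t
        (hasDerivAt_circleMap_radius t θ))
    (fun t ht θ => by
      simpa using (fderiv ℝ w (circleMap 0 t θ)).le_of_opNorm_le (hC _ (hmem t ht θ))
        (circleMap 0 1 θ))
  refine (hderiv.const_mul (2 * π)⁻¹).congr_deriv ?_
  have hs0 := hs.1.ne'
  simp_rw [circleAverage_def, eulerDeriv, circleMap_zero_eq_smul s, map_smul, smul_eq_mul,
    intervalIntegral.integral_const_mul]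
  field_simp

lemma ContinuousLinearMap.apply_add_apply_mul_I (B : ℂ →L[ℝ] ℂ →L[ℝ] ℝ) (z : ℂ) :
    B z z + B (z * Complex.I) (z * Complex.I) = ‖z‖ ^ 2 * (B 1 1 + B Complex.I Complex.I) := by
  obtain ⟨a, b, rfl⟩ : ∃ a b : ℝ, z = a • (1 : ℂ) + b • Complex.I :=
    ⟨z.re, z.im, by simp [Complex.real_smul]⟩
  have hI : (a • (1 : ℂ) + b • Complex.I) * Complex.I = (-b) • (1 : ℂ) + a • Complex.I := by
    apply Complex.ext <;> simp
  have hnorm : ‖a • (1 : ℂ) + b • Complex.I‖ ^ 2 = a ^ 2 + b ^ 2 := by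
    simp [Complex.sq_norm, Complex.real_smul, Complex.normSq_add_mul_I]
  rw [hI, hnorm]
  simp only [map_add, map_smul, add_apply, smul_apply, smul_eq_mul]
  ring

lemma laplacian_complex_eq (v : ℂ → ℝ) (z : ℂ) :
    Δ v z = fderiv ℝ (fderiv ℝ v) z 1 1 + fderiv ℝ (fderiv ℝ v) z Complex.I Complex.I := by
  simp [laplacian_eq_iteratedFDeriv_complexPlane, iteratedFDeriv_two_apply]

theorem ContDiffOn.continuousOn_laplacian {E F : Type*} [NormedAddCommGroup E]
    [InnerProductSpace ℝ E] [FiniteDimensional ℝ E] [NormedAddCommGroup F] [NormedSpace ℝ F]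
    {f : E → F} {U : Set E} (hf : ContDiffOn ℝ 2 f U) (hU : IsOpen U) :
    ContinuousOn (Δ f) U := by
  have h : ContinuousOn (iteratedFDeriv ℝ 2 f) U :=
    (hf.continuousOn_iteratedFDerivWithin le_rfl hU.uniqueDiffOn).congr
      fun x hx => (iteratedFDerivWithin_of_isOpen 2 hU hx).symm
  rw [laplacian_eq_iteratedFDeriv_stdOrthonormalBasis]
  exact continuousOn_finsetSum _ fun i _ => (continuous_eval_const _).comp_continuousOn h

theorem circleAverage_eulerDeriv_eulerDeriv {v : ℂ → ℝ} {R s : ℝ}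
    (hv : ContDiffOn ℝ 2 v (ball 0 R)) (hs : s ∈ Ico 0 R) :
    circleAverage (eulerDeriv (eulerDeriv v)) 0 s = s ^ 2 * circleAverage (Δ v) 0 s := by
  set Dv := fderiv ℝ v
  set Hv := fderiv ℝ (fderiv ℝ v)
  have hDv : ContDiffOn ℝ 1 Dv (ball 0 R) := hv.fderiv_of_isOpen isOpen_ball (by norm_num)
  have hHv : ContinuousOn Hv (ball 0 R) := hDv.continuousOn_fderiv_of_isOpen isOpen_ball le_rfl
  have hHvz : ∀ z ∈ ball (0 : ℂ) R, HasFDerivAt Dv (Hv z) z := fun z hz =>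
    ((hDv.differentiableOn one_ne_zero).differentiableAt (isOpen_ball.mem_nhds hz)).hasFDerivAt
  have hmem : ∀ θ, circleMap 0 s θ ∈ ball 0 R := fun θ => by simpa [abs_of_nonneg hs.1] using hs.2
  have hHvc : Continuous fun θ => Hv (circleMap 0 s θ) :=
    hHv.comp_continuous (continuous_circleMap 0 s) hmem
  -- `T = ∂_θ v` and `T' = ∂_θ² v` along the circle; `T` is periodic, so `T'` has mean zero.
  set T : ℝ → ℝ := fun θ => Dv (circleMap 0 s θ) (circleMap 0 s θ * Complex.I)
  set T' : ℝ → ℝ := fun θ => Hv (circleMap 0 s θ) (circleMap 0 s θ * Complex.I)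
    (circleMap 0 s θ * Complex.I) - Dv (circleMap 0 s θ) (circleMap 0 s θ)
  have hT : ∀ θ, HasDerivAt T (T' θ) θ := by
    intro θ
    have hD := (hHvz _ (hmem θ)).comp_hasDerivAt θ (hasDerivAt_circleMap 0 s θ)
    refine (hD.clm_apply ((hasDerivAt_circleMap 0 s θ).mul_const Complex.I)).congr_deriv ?_
    simp [T', mul_assoc, sub_eq_add_neg]
  have hpt : ∀ θ, fderiv ℝ (eulerDeriv v) (circleMap 0 s θ) (circleMap 0 s θ)
      = s ^ 2 * Δ v (circleMap 0 s θ) - T' θ := by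
    intro θ
    set z := circleMap 0 s θ
    have hE : HasFDerivAt (eulerDeriv v) ((Dv z).comp (.id ℝ ℂ) + (Hv z).flip z) z :=
      (hHvz z (hmem θ)).clm_apply (hasFDerivAt_id z)
    have hnorm : ‖z‖ = s := by simp [z, abs_of_nonneg hs.1]
    have hΔ : Δ v z = Hv z 1 1 + Hv z Complex.I Complex.I := laplacian_complex_eq v z
    have hrot := (Hv z).apply_add_apply_mul_I z
    rw [hnorm] at hrot
    rw [hE.fderiv, hΔ]
    simp only [add_apply, ContinuousLinearMap.coe_comp,
      ContinuousLinearMap.coe_id', Function.comp_apply, id_eq, ContinuousLinearMap.flip_apply, T']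
    linarith
  have hDvc : Continuous fun θ => Dv (circleMap 0 s θ) :=
    hDv.continuousOn.comp_continuous (continuous_circleMap 0 s) hmem
  have hΔc : Continuous fun θ => Δ v (circleMap 0 s θ) := by
    simp_rw [laplacian_complex_eq]
    exact ((hHvc.clm_apply continuous_const).clm_apply continuous_const).add
      ((hHvc.clm_apply continuous_const).clm_apply continuous_const)
  have hT'c : Continuous T' := by
    have hcI : Continuous fun θ => circleMap 0 s θ * Complex.I :=
      (continuous_circleMap 0 s).mul continuous_const
    exact ((hHvc.clm_apply hcI).clm_apply hcI).sub (hDvc.clm_apply (continuous_circleMap 0 s))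
  simp only [circleAverage_def, eulerDeriv, smul_eq_mul]
  rw [intervalIntegral.integral_congr (fun θ _ => hpt θ),
    intervalIntegral.integral_sub ((hΔc.intervalIntegrable _ _).const_mul _)
      (hT'c.intervalIntegrable _ _),
    intervalIntegral.integral_const_mul,
    intervalIntegral.integral_eq_sub_of_hasDerivAt (fun θ _ => hT θ) (hT'c.intervalIntegrable _ _)]
  have hper : T (2 * π) = T 0 := by
    have h := periodic_circleMap 0 s 0
    rw [zero_add] at h
    simp only [T, h]
  rw [hper]
  ring

theorem monotoneOn_exp_mul_setIntegral_ball_div_sq {v : ℂ → ℝ} {c R : ℝ} (hc : 0 ≤ c)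
    (hv : ContDiffOn ℝ 2 v (ball 0 R)) (hv0 : ∀ z ∈ ball 0 R, 0 ≤ v z)
    (hΔ : ∀ z ∈ ball 0 R, -Δ v z ≤ c * v z) :
    MonotoneOn (fun r => exp (c / 4 * r ^ 2) * (1 / r ^ 2 * ∫ z in ball 0 r, v z))
      (Ioo 0 R) := by
  have hE : ContDiffOn ℝ 1 (eulerDeriv v) (ball 0 R) :=
    (hv.fderiv_of_isOpen isOpen_ball (by norm_num)).clm_apply contDiffOn_id
  have hsphere : ∀ {s}, s ∈ Ioo 0 R → sphere (0 : ℂ) |s| ⊆ ball 0 R := fun hs =>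
    sphere_subset_ball (by rw [abs_of_pos hs.1]; exact hs.2)
  have hmono := monotoneOn_exp_mul_integral_div_sq hc
    (continuousOn_circleAverage_Ioo hv.continuousOn)
    (fun s hs => circleAverage_nonneg_of_nonneg fun z hz => hv0 z (hsphere hs hz))
    ((continuousOn_circleAverage_Ioo hE.continuousOn).mono
      fun s hs => ⟨by linarith [hs.1, hs.2], hs.2⟩)
    (by simp [circleAverage_def, circleMap_zero_radius, eulerDeriv])
    (fun s hs => hasDerivAt_circleAverage_radius (hv.of_le (by norm_num)) hs)
    (fun s hs => (hasDerivAt_circleAverage_radius hE hs).congr_deriv (by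
      rw [circleAverage_eulerDeriv_eulerDeriv hv (Ioo_subset_Ico_self hs)]
      field_simp [hs.1.ne']))
    (g := fun s => s * circleAverage (Δ v) 0 s) fun s hs => by
      have hint : ∀ {f : ℂ → ℝ}, ContinuousOn f (ball 0 R) → CircleIntegrable f 0 s :=
        fun hf => (hf.mono (hsphere hs)).circleIntegrable'
      have hle : circleAverage (fun z => (-c) • v z) 0 s ≤ circleAverage (Δ v) 0 s :=
        circleAverage_mono (hint (hv.continuousOn.const_smul (-c)))
          (hint (hv.continuousOn_laplacian isOpen_ball)) fun z hz => by
            simpa [neg_mul] using neg_le.1 (hΔ z (hsphere hs hz))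
      rw [circleAverage_fun_smul, smul_eq_mul] at hle
      nlinarith [hs.1]
  intro a ha b hb hab
  simp only [setIntegral_ball_eq_integral_circleAverage ha.1.le (hv.continuousOn.mono
      (closedBall_subset_ball ha.2)), setIntegral_ball_eq_integral_circleAverage hb.1.le
      (hv.continuousOn.mono (closedBall_subset_ball hb.2))]
  have := mul_le_mul_of_nonneg_left (hmono ha hb hab) two_pi_pos.le
  simp only at this
  linarith

theorem lap2_repr_apply {E : Type*} [NormedAddCommGroup E] [InnerProductSpace ℝ E]
    [FiniteDimensional ℝ E] (b : OrthonormalBasis (Fin 2) ℝ E)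
    (u : EuclideanSpace ℝ (Fin 2) → ℝ) {z : E}
    (hz : DifferentiableAt ℝ (fderiv ℝ (u ∘ b.repr)) z) :
    lap2 u (b.repr z) = Δ (u ∘ b.repr) z := by
  have hpderiv : ∀ (f : EuclideanSpace ℝ (Fin 2) → ℝ) i,
      pderiv2 i f ∘ b.repr = fun w => fderiv ℝ (f ∘ b.repr) w (b i) := by
    intro f i
    ext w
    rw [← LinearIsometryEquiv.coe_toContinuousLinearEquiv, ContinuousLinearEquiv.comp_right_fderiv]
    simp [pderiv2, b.repr_self]
  simp only [lap2, laplacian_eq_iteratedFDeriv_orthonormalBasis _ b, iteratedFDeriv_two_apply]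
  refine Finset.sum_congr rfl fun i _ => ?_
  rw [← Function.comp_apply (f := pderiv2 i _), hpderiv, hpderiv]
  simp [fderiv_clm_apply hz (differentiableAt_const _)]

theorem setIntegral_ball_comp_linearIsometryEquiv {E F : Type*} [NormedAddCommGroup E]
    [InnerProductSpace ℝ E] [FiniteDimensional ℝ E] [MeasurableSpace E] [BorelSpace E]
    [NormedAddCommGroup F] [InnerProductSpace ℝ F] [FiniteDimensional ℝ F] [MeasurableSpace F]
    [BorelSpace F] (e : E ≃ₗᵢ[ℝ] F) (u : F → ℝ) (r : ℝ) :
    ∫ x in ball 0 r, u x = ∫ z in ball 0 r, u (e z) := by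
  rw [← e.measurePreserving.setIntegral_preimage_emb e.toHomeomorph.measurableEmbedding,
    e.preimage_ball, map_zero]

theorem stmt0_general (R c : ℝ) (hc : 0 < c)
    (u : EuclideanSpace ℝ (Fin 2) → ℝ)
    (hu : ContDiffOn ℝ 2 u (Metric.closedBall 0 R))
    (hupos : ∀ x ∈ Metric.closedBall (0 : EuclideanSpace ℝ (Fin 2)) R, 0 ≤ u x)
    (hineq : ∀ x ∈ Metric.closedBall (0 : EuclideanSpace ℝ (Fin 2)) R,
      -lap2 u x ≤ c * u x) :
    MonotoneOn
      (fun r : ℝ => Real.exp (c / 4 * r ^ 2) *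
        ((1 / r ^ 2) * ∫ x in Metric.ball (0 : EuclideanSpace ℝ (Fin 2)) r, u x))
      (Set.Ioo 0 R) := by
  set e := Complex.orthonormalBasisOneI.repr
  have he : MapsTo e (ball 0 R) (ball 0 R) := fun z hz => by simpa using hz
  have hv : ContDiffOn ℝ 2 (u ∘ e) (ball 0 R) :=
    (hu.mono ball_subset_closedBall).comp e.contDiff.contDiffOn he
  have hmono := monotoneOn_exp_mul_setIntegral_ball_div_sq hc.le hv
    (fun z hz => hupos _ (ball_subset_closedBall (he hz))) fun z hz => by
      have hDv := ((hv.contDiffAt (isOpen_ball.mem_nhds hz)).fderiv_right (m := 1) le_rfl)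
      rw [← lap2_repr_apply _ u (hDv.differentiableAt one_ne_zero)]
      exact hineq _ (ball_subset_closedBall (he hz))
  simpa only [setIntegral_ball_comp_linearIsometryEquiv e, Function.comp_apply] using hmono

/-- Monotonicity formula: if `u ≥ 0` is `C²` on the closed disk of radius `R` and satisfies
`Δu ≤ c·u` with the geometer's Laplacian `Δ = -div∇`, then
`r ↦ e^{(c/4)r²}·(1/r²)∫_{D_r} u` is non-decreasing on `(0,R)`. -/
theorem stmt0 (R c : ℝ) (hR : 0 < R) (hc : 0 < c)
    (u : EuclideanSpace ℝ (Fin 2) → ℝ)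
    (hu : ContDiffOn ℝ 2 u (Metric.closedBall 0 R))
    (hupos : ∀ x ∈ Metric.closedBall (0 : EuclideanSpace ℝ (Fin 2)) R, 0 ≤ u x)
    (hineq : ∀ x ∈ Metric.closedBall (0 : EuclideanSpace ℝ (Fin 2)) R,
      -lap2 u x ≤ c * u x) :
    MonotoneOn
      (fun r : ℝ => Real.exp (c / 4 * r ^ 2) *
        ((1 / r ^ 2) * ∫ x in Metric.ball (0 : EuclideanSpace ℝ (Fin 2)) r, u x))
      (Set.Ioo 0 R) :=
  stmt0_general R c hc u hu hupos hineq
end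

section
/- If f : (0,R) → ℝ is defined by f(r) = (1/r²) ∫_{D_r} u for a C² function u with -Δu ≤ c·u (Euclidean Laplacian convention Δ = div ∇) and u ≥ 0, then f'(r) ≥ -(c r / 2) f(r) for all r in (0,R). -/
/-!
Write `S s = ∫_{-π}^{π} u (s e_θ) dθ` for the integral of `u` over the circle of radius `s` and
`G s = ∫_0^s t S t dt`, which is `∫_{D_s} u` by polar coordinates, so that `f = G / r²`.
Integrating the polar form of the Laplacian over the circle gives
`(s S' s)' = s ∫ Δu (s e_θ) dθ ≥ -c s S s = -c G' s`, hence `s S' s ≥ -c G s`.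
As `u ≥ 0`, `G` is nondecreasing, so `(s² S s - 2 G s)' = s (s S' s) ≥ -c s G r` on `[0, r]`,
which integrates to `r² S r - 2 G r ≥ -c r² G r / 2`, that is, `r³ f' r ≥ -(c r / 2) r³ f r`.
-/

open MeasureTheory

open Real Set Filter Topology

noncomputable section

namespace DiskMean

theorem le_of_hasDerivAt_nonneg {g g' : ℝ → ℝ} {a b : ℝ} (hab : a ≤ b)
    (hg : ∀ x ∈ Icc a b, HasDerivAt g (g' x) x) (hg' : ∀ x ∈ Ioo a b, 0 ≤ g' x) :
    g a ≤ g b :=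
  monotoneOn_of_hasDerivWithinAt_nonneg (convex_Icc a b)
    (fun x hx => (hg x hx).continuousAt.continuousWithinAt)
    (fun x hx => (hg x (interior_subset hx)).hasDerivWithinAt)
    (by rwa [interior_Icc]) (left_mem_Icc.2 hab) (right_mem_Icc.2 hab) hab

theorem hasDerivAt_integral_of_continuousOn {E : Type*} [NormedAddCommGroup E]
    [NormedSpace ℝ E] [CompleteSpace E] {g : ℝ → E} {U : Set ℝ} (hU : IsOpen U)
    (hg : ContinuousOn g U) {a b : ℝ} (hab : uIcc a b ⊆ U) :
    HasDerivAt (fun x => ∫ t in a..x, g t) (g b) b :=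
  intervalIntegral.integral_hasDerivAt_right (hg.mono hab).intervalIntegrable
    (hg.stronglyMeasurableAtFilter hU b (hab right_mem_uIcc))
    (hg.continuousAt (hU.mem_nhds (hab right_mem_uIcc)))

section RadialComparison

variable {S S' A' G : ℝ → ℝ} {c R : ℝ}

theorem neg_mul_le_mul_deriv (hA : ∀ s ∈ Ico 0 R, HasDerivAt (fun t => t * S' t) (A' s) s)
    (hG : ∀ s ∈ Ico 0 R, HasDerivAt G (s * S s) s) (hG0 : G 0 = 0)
    (hAc : ∀ s ∈ Ico 0 R, -(c * (s * S s)) ≤ A' s) {s : ℝ} (hs : s ∈ Ico 0 R) :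
    -(c * G s) ≤ s * S' s := by
  have hIcc : ∀ {t}, t ∈ Icc 0 s → t ∈ Ico 0 R := fun ht => ⟨ht.1, ht.2.trans_lt hs.2⟩
  have hmono := le_of_hasDerivAt_nonneg hs.1 (g := fun t => t * S' t + c * G t)
    (fun t ht => (hA t (hIcc ht)).add ((hG t (hIcc ht)).const_mul c))
    (fun t ht => by linarith [hAc t (hIcc (Ioo_subset_Icc_self ht))])
  simp only [zero_mul, hG0, mul_zero, add_zero] at hmono
  linarith

theorem neg_mul_sq_le_sq_mul_sub (hS : ∀ s ∈ Ico 0 R, HasDerivAt S (S' s) s)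
    (hG : ∀ s ∈ Ico 0 R, HasDerivAt G (s * S s) s) (hG0 : G 0 = 0)
    (hSS' : ∀ s ∈ Ico 0 R, -(c * G s) ≤ s * S' s)
    (hS0 : ∀ s ∈ Ico 0 R, 0 ≤ S s) (hc : 0 ≤ c) {r : ℝ} (hr : r ∈ Ioo 0 R) :
    -(c * G r * r ^ 2 / 2) ≤ r ^ 2 * S r - 2 * G r := by
  have hIcc : ∀ {t}, t ∈ Icc 0 r → t ∈ Ico 0 R := fun ht => ⟨ht.1, ht.2.trans_lt hr.2⟩
  have hGmono : ∀ t ∈ Icc 0 r, G t ≤ G r := fun t ht =>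
    le_of_hasDerivAt_nonneg ht.2 (fun x hx => hG x (hIcc ⟨ht.1.trans hx.1, hx.2⟩))
      (fun x hx => mul_nonneg (ht.1.trans hx.1.le) (hS0 x (hIcc ⟨ht.1.trans hx.1.le, hx.2.le⟩)))
  have hmono := le_of_hasDerivAt_nonneg hr.1.le
    (g := fun t => t ^ 2 * S t - 2 * G t + c * G r / 2 * t ^ 2)
    (g' := fun t => t * (t * S' t) + c * G r * t)
    (fun t ht => by
      refine ((((hasDerivAt_pow 2 t).mul (hS t (hIcc ht))).sub
        ((hG t (hIcc ht)).const_mul 2)).add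
          ((hasDerivAt_pow 2 t).const_mul (c * G r / 2))).congr_deriv ?_
      push_cast
      ring)
    (fun t ht => by
      have hSS't := mul_le_mul_of_nonneg_left (hSS' t (hIcc ⟨ht.1.le, ht.2.le⟩)) ht.1.le
      have hGt := mul_le_mul_of_nonneg_left (hGmono t ⟨ht.1.le, ht.2.le⟩)
        (mul_nonneg hc ht.1.le)
      nlinarith)
  simp only [hG0] at hmono
  linarith

theorem neg_mul_le_deriv_div_sq (hS : ∀ s ∈ Ico 0 R, HasDerivAt S (S' s) s)
    (hA : ∀ s ∈ Ico 0 R, HasDerivAt (fun t => t * S' t) (A' s) s)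
    (hG : ∀ s ∈ Ico 0 R, HasDerivAt G (s * S s) s) (hG0 : G 0 = 0)
    (hAc : ∀ s ∈ Ico 0 R, -(c * (s * S s)) ≤ A' s)
    (hS0 : ∀ s ∈ Ico 0 R, 0 ≤ S s) (hc : 0 ≤ c) {r : ℝ} (hr : r ∈ Ioo 0 R) :
    -(c * r / 2) * (G r / r ^ 2) ≤ deriv (fun t => G t / t ^ 2) r := by
  have hr0 := hr.1
  have hsq := neg_mul_sq_le_sq_mul_sub hS hG hG0
    (fun s hs => neg_mul_le_mul_deriv hA hG hG0 hAc hs) hS0 hc hr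
  have hquot : HasDerivAt (fun t => G t / t ^ 2) ((r ^ 2 * S r - 2 * G r) / r ^ 3) r := by
    refine ((hG r ⟨hr0.le, hr.2⟩).div (hasDerivAt_pow 2 r) (by positivity)).congr_deriv ?_
    field_simp
    push_cast
    ring
  rw [hquot.deriv]
  calc -(c * r / 2) * (G r / r ^ 2) = -(c * G r * r ^ 2 / 2) / r ^ 3 := by
        field_simp
    _ ≤ (r ^ 2 * S r - 2 * G r) / r ^ 3 := by gcongr

end RadialComparison

local notation "ℝ²" => EuclideanSpace ℝ (Fin 2)

def radialDir (θ : ℝ) : ℝ² :=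
  cos θ • EuclideanSpace.single 0 1 + sin θ • EuclideanSpace.single 1 1

def angularDir (θ : ℝ) : ℝ² :=
  (-sin θ) • EuclideanSpace.single 0 1 + cos θ • EuclideanSpace.single 1 1

theorem hasDerivAt_radialDir (θ : ℝ) : HasDerivAt radialDir (angularDir θ) θ :=
  ((hasDerivAt_cos θ).smul_const _).add ((hasDerivAt_sin θ).smul_const _)

theorem hasDerivAt_angularDir (θ : ℝ) : HasDerivAt angularDir (-radialDir θ) θ := by
  refine (((hasDerivAt_sin θ).neg.smul_const _).add
    ((hasDerivAt_cos θ).smul_const _)).congr_deriv ?_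
  simp only [radialDir]
  module

theorem continuous_radialDir : Continuous radialDir :=
  continuous_iff_continuousAt.2 fun θ => (hasDerivAt_radialDir θ).continuousAt

theorem continuous_angularDir : Continuous angularDir :=
  continuous_iff_continuousAt.2 fun θ => (hasDerivAt_angularDir θ).continuousAt

theorem radialDir_neg_pi : radialDir (-π) = radialDir π := by simp [radialDir]

theorem angularDir_neg_pi : angularDir (-π) = angularDir π := by simp [angularDir]

theorem norm_radialDir (θ : ℝ) : ‖radialDir θ‖ = 1 := by
  simp [radialDir, EuclideanSpace.norm_eq, Fin.sum_univ_two]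

theorem norm_smul_radialDir (s θ : ℝ) : ‖s • radialDir θ‖ = |s| := by
  rw [norm_smul, norm_radialDir, mul_one, Real.norm_eq_abs]

theorem smul_radialDir_mem_ball {s R : ℝ} (hs : |s| < R) (θ : ℝ) :
    s • radialDir θ ∈ Metric.ball 0 R := by
  rwa [mem_ball_zero_iff, norm_smul_radialDir]

theorem apply_radialDir_add_apply_angularDir (B : ℝ² →L[ℝ] ℝ² →L[ℝ] ℝ) (θ : ℝ) :
    B (radialDir θ) (radialDir θ) + B (angularDir θ) (angularDir θ) =
      ∑ i, B (EuclideanSpace.single i 1) (EuclideanSpace.single i 1) := by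
  simp only [radialDir, angularDir, map_add, map_smul, add_apply,
    smul_apply, smul_eq_mul, Fin.sum_univ_two]
  linear_combination (B (EuclideanSpace.single 0 1) (EuclideanSpace.single 0 1) +
    B (EuclideanSpace.single 1 1) (EuclideanSpace.single 1 1)) * sin_sq_add_cos_sq θ

theorem lap2_eq_sum_fderiv_fderiv {u : ℝ² → ℝ} {x : ℝ²}
    (hu : DifferentiableAt ℝ (fderiv ℝ u) x) :
    lap2 u x = ∑ i, fderiv ℝ (fderiv ℝ u) x (EuclideanSpace.single i 1)
      (EuclideanSpace.single i 1) := by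
  refine Finset.sum_congr rfl fun i _ => ?_
  change fderiv ℝ (fun y => fderiv ℝ u y (EuclideanSpace.single i 1)) x _ = _
  rw [fderiv_clm_apply hu (differentiableAt_const _)]
  simp

theorem lap2_eq_radialDir_add_angularDir {u : ℝ² → ℝ} {x : ℝ²}
    (hu : DifferentiableAt ℝ (fderiv ℝ u) x) (θ : ℝ) :
    lap2 u x = fderiv ℝ (fderiv ℝ u) x (radialDir θ) (radialDir θ) +
      fderiv ℝ (fderiv ℝ u) x (angularDir θ) (angularDir θ) := by
  rw [lap2_eq_sum_fderiv_fderiv hu, apply_radialDir_add_apply_angularDir]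

theorem continuousOn_lap2 {u : ℝ² → ℝ} {U : Set ℝ²} (hu : ContDiffOn ℝ 2 u U) (hU : IsOpen U) :
    ContinuousOn (lap2 u) U := by
  have hDu : ContDiffOn ℝ 1 (fderiv ℝ u) U := hu.fderiv_of_isOpen hU (by norm_num)
  have hD2u := hDu.continuousOn_fderiv_of_isOpen hU le_rfl
  have hsum : ContinuousOn (fun x => ∑ i, fderiv ℝ (fderiv ℝ u) x (EuclideanSpace.single i 1)
      (EuclideanSpace.single i 1)) U :=
    continuousOn_finsetSum _ fun i _ =>
      (hD2u.clm_apply continuousOn_const).clm_apply continuousOn_const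
  exact hsum.congr fun x hx => lap2_eq_sum_fderiv_fderiv
    ((hDu.differentiableOn one_ne_zero).differentiableAt (hU.mem_nhds hx))

def measurableEquivProd : (ℝ × ℝ) ≃ᵐ ℝ² :=
  ((MeasurableEquiv.toLp 2 (Fin 2 → ℝ)).symm.trans MeasurableEquiv.finTwoArrow).symm

theorem measurePreserving_measurableEquivProd : MeasurePreserving measurableEquivProd :=
  ((EuclideanSpace.volume_preserving_symm_measurableEquiv_toLp (Fin 2)).trans
    (volume_preserving_finTwoArrow ℝ)).symm _

theorem measurableEquivProd_polarCoord_symm (s θ : ℝ) :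
    measurableEquivProd (polarCoord.symm (s, θ)) = s • radialDir θ := by
  ext i
  fin_cases i <;>
    simp [measurableEquivProd, radialDir, polarCoord_symm_apply]

theorem setIntegral_polarCoord_target_eq_integral (g : ℝ² → ℝ) :
    ∫ p in polarCoord.target, p.1 * g (p.1 • radialDir p.2) = ∫ x, g x := by
  rw [← measurePreserving_measurableEquivProd.integral_comp measurableEquivProd.measurableEmbedding,
    ← integral_comp_polarCoord_symm]
  congr with p
  rw [smul_eq_mul, ← measurableEquivProd_polarCoord_symm]

theorem setIntegral_ball_eq_integral_polar {g : ℝ² → ℝ} {r : ℝ} (hr : 0 ≤ r)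
    (hg : ContinuousOn g (Metric.closedBall 0 r)) :
    ∫ x in Metric.ball 0 r, g x = ∫ s in 0..r, s * ∫ θ in -π..π, g (s • radialDir θ) := by
  set h : ℝ × ℝ → ℝ := fun p => p.1 * g (p.1 • radialDir p.2)
  have hball : ∀ p ∈ polarCoord.target,
      p.1 * (Metric.ball 0 r).indicator g (p.1 • radialDir p.2) =
        (Iio r ×ˢ univ).indicator h p := by
    rintro ⟨s, θ⟩ ⟨hs, -⟩
    have hmem : s • radialDir θ ∈ Metric.ball 0 r ↔ s < r := by
      rw [mem_ball_zero_iff, norm_smul_radialDir, abs_of_pos (show 0 < s from hs)]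
    by_cases hsr : s < r
    · rw [indicator_of_mem (hmem.2 hsr), indicator_of_mem (show (s, θ) ∈ Iio r ×ˢ univ from
        ⟨hsr, trivial⟩)]
    · rw [indicator_of_notMem (mt hmem.1 hsr), indicator_of_notMem fun h => hsr h.1, mul_zero]
  have htarget : polarCoord.target ∩ Iio r ×ˢ univ = Ioo 0 r ×ˢ Ioo (-π) π := by
    ext ⟨s, θ⟩
    simp only [polarCoord_target, mem_inter_iff, mem_prod, mem_Ioi, mem_Iio, mem_univ, mem_Ioo]
    tauto
  have hint : IntegrableOn h (Icc 0 r ×ˢ Icc (-π) π) := by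
    refine ContinuousOn.integrableOn_compact (isCompact_Icc.prod isCompact_Icc) ?_
    refine continuousOn_fst.mul (hg.comp
      (continuous_fst.smul (continuous_radialDir.comp continuous_snd)).continuousOn ?_)
    rintro ⟨s, θ⟩ ⟨hs, -⟩
    simpa [norm_smul_radialDir, abs_of_nonneg hs.1] using hs.2
  rw [← integral_indicator Metric.isOpen_ball.measurableSet,
    ← setIntegral_polarCoord_target_eq_integral,
    setIntegral_congr_fun polarCoord.open_target.measurableSet hball,
    setIntegral_indicator (measurableSet_Iio.prod MeasurableSet.univ), htarget,
    Measure.volume_eq_prod, setIntegral_prod _ ?_, intervalIntegral.integral_of_le hr,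
    integral_Ioc_eq_integral_Ioo]
  · refine setIntegral_congr_fun measurableSet_Ioo fun s _ => ?_
    rw [intervalIntegral.integral_of_le (by linarith [pi_pos]), integral_Ioc_eq_integral_Ioo,
      ← integral_const_mul]
  · rw [← Measure.volume_eq_prod]
    exact hint.mono_set (prod_mono Ioo_subset_Icc_self Ioo_subset_Icc_self)

theorem continuous_comp_smul_radialDir {F : Type*} [TopologicalSpace F] {V : ℝ² → F} {s R : ℝ}
    (hV : ContinuousOn V (Metric.ball 0 R)) (hs : |s| < R) :
    Continuous fun θ => V (s • radialDir θ) :=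
  hV.comp_continuous (continuous_radialDir.const_smul s) (smul_radialDir_mem_ball hs)

theorem hasDerivAt_integral_comp_smul_radialDir {F : Type*} [NormedAddCommGroup F]
    [NormedSpace ℝ F] [CompleteSpace F] {Φ : ℝ² → F} {s R : ℝ}
    (hΦ : ContDiffOn ℝ 1 Φ (Metric.ball 0 R)) (hs : |s| < R) :
    HasDerivAt (fun t => ∫ θ in -π..π, Φ (t • radialDir θ))
      (∫ θ in -π..π, fderiv ℝ Φ (s • radialDir θ) (radialDir θ)) s := by
  obtain ⟨ρ, hsρ, hρR⟩ := exists_between hs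
  have hnhds : ∀ t ∈ Metric.ball s (ρ - |s|), |t| < ρ := fun t ht => by
    rw [Metric.mem_ball, Real.dist_eq] at ht
    linarith [abs_sub_abs_le_abs_sub t s]
  have hDΦ := hΦ.continuousOn_fderiv_of_isOpen Metric.isOpen_ball le_rfl
  obtain ⟨M, hM⟩ := (isCompact_closedBall (0 : ℝ²) ρ).exists_bound_of_continuousOn
    (hDΦ.mono (Metric.closedBall_subset_ball hρR))
  have hcont : ∀ {t}, |t| < R → Continuous fun θ => Φ (t • radialDir θ) :=
    continuous_comp_smul_radialDir hΦ.continuousOn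
  have hcont' : ∀ {t}, |t| < R →
      Continuous fun θ => fderiv ℝ Φ (t • radialDir θ) (radialDir θ) := fun ht =>
    (continuous_comp_smul_radialDir hDΦ ht).clm_apply continuous_radialDir
  refine (intervalIntegral.hasDerivAt_integral_of_dominated_loc_of_deriv_le (bound := fun _ => M)
    (F' := fun t θ => fderiv ℝ Φ (t • radialDir θ) (radialDir θ))
    (Metric.ball_mem_nhds s (sub_pos.2 hsρ)) ?_ ((hcont (hsρ.trans hρR)).intervalIntegrable _ _)
    (hcont' (hsρ.trans hρR)).aestronglyMeasurable ?_ intervalIntegrable_const ?_).2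
  · filter_upwards [Metric.ball_mem_nhds s (sub_pos.2 hsρ)] with t ht
    exact (hcont ((hnhds t ht).trans hρR)).aestronglyMeasurable
  · refine ae_of_all _ fun θ _ t ht => ?_
    have hmem : t • radialDir θ ∈ Metric.closedBall 0 ρ := by
      rw [mem_closedBall_zero_iff, norm_smul_radialDir]
      exact (hnhds t ht).le
    calc ‖fderiv ℝ Φ (t • radialDir θ) (radialDir θ)‖
        ≤ ‖fderiv ℝ Φ (t • radialDir θ)‖ * ‖radialDir θ‖ := ContinuousLinearMap.le_opNorm _ _
      _ ≤ M := by rw [norm_radialDir, mul_one]; exact hM _ hmem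
  · refine ae_of_all _ fun θ _ t ht => ?_
    have hdiff : DifferentiableAt ℝ Φ (t • radialDir θ) :=
      (hΦ.differentiableOn one_ne_zero).differentiableAt
        (Metric.isOpen_ball.mem_nhds (smul_radialDir_mem_ball ((hnhds t ht).trans hρR) θ))
    have hline : HasDerivAt (fun t : ℝ => t • radialDir θ) (radialDir θ) t := by
      simpa using (hasDerivAt_id t).smul_const (radialDir θ)
    exact hdiff.hasFDerivAt.comp_hasDerivAt t hline

-- FTC for the `2π`-periodic function `θ ↦ V (s • radialDir θ) (angularDir θ)`, whose derivative
-- is the difference of the two integrands.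
theorem integral_apply_radialDir_eq {V : ℝ² → ℝ² →L[ℝ] ℝ} {s R : ℝ}
    (hV : ContDiffOn ℝ 1 V (Metric.ball 0 R)) (hs : |s| < R) :
    ∫ θ in -π..π, V (s • radialDir θ) (radialDir θ) =
      s * ∫ θ in -π..π, fderiv ℝ V (s • radialDir θ) (angularDir θ) (angularDir θ) := by
  have hDV := hV.continuousOn_fderiv_of_isOpen Metric.isOpen_ball le_rfl
  have hint₁ : IntervalIntegrable (fun θ => V (s • radialDir θ) (radialDir θ)) volume (-π) π :=
    ((continuous_comp_smul_radialDir hV.continuousOn hs).clm_apply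
      continuous_radialDir).intervalIntegrable _ _
  have hint₂ : IntervalIntegrable
      (fun θ => fderiv ℝ V (s • radialDir θ) (angularDir θ) (angularDir θ)) volume (-π) π :=
    (((continuous_comp_smul_radialDir hDV hs).clm_apply continuous_angularDir).clm_apply
      continuous_angularDir).intervalIntegrable _ _
  have hderiv : ∀ θ, HasDerivAt (fun θ => V (s • radialDir θ) (angularDir θ))
      (s * fderiv ℝ V (s • radialDir θ) (angularDir θ) (angularDir θ) -
        V (s • radialDir θ) (radialDir θ)) θ := fun θ => by
    have hV' : HasFDerivAt V (fderiv ℝ V (s • radialDir θ)) (s • radialDir θ) :=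
      ((hV.differentiableOn one_ne_zero).differentiableAt
        (Metric.isOpen_ball.mem_nhds (smul_radialDir_mem_ball hs θ))).hasFDerivAt
    have hcurve : HasDerivAt (fun θ => V (s • radialDir θ))
        (fderiv ℝ V (s • radialDir θ) (s • angularDir θ)) θ :=
      hV'.comp_hasDerivAt θ ((hasDerivAt_radialDir θ).const_smul s)
    refine (hcurve.clm_apply (hasDerivAt_angularDir θ)).congr_deriv ?_
    simp only [map_smul, map_neg, smul_apply, smul_eq_mul]
    ring
  have hFTC := intervalIntegral.integral_eq_sub_of_hasDerivAt (fun θ _ => hderiv θ)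
    ((hint₂.const_mul s).sub hint₁)
  rw [radialDir_neg_pi, angularDir_neg_pi, sub_self, intervalIntegral.integral_sub
    (hint₂.const_mul s) hint₁, intervalIntegral.integral_const_mul] at hFTC
  linarith

-- The polar form `Δu = s⁻¹ ∂ₛ (s ∂ₛ u) + s⁻² ∂²_θ u` integrated over the circle, where the
-- angular part integrates to zero.
theorem hasDerivAt_mul_integral_fderiv_radialDir {u : ℝ² → ℝ} {s R : ℝ}
    (hu : ContDiffOn ℝ 2 u (Metric.ball 0 R)) (hs : |s| < R) :
    HasDerivAt (fun t => t * ∫ θ in -π..π, fderiv ℝ u (t • radialDir θ) (radialDir θ))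
      (s * ∫ θ in -π..π, lap2 u (s • radialDir θ)) s := by
  have hDu : ContDiffOn ℝ 1 (fderiv ℝ u) (Metric.ball 0 R) :=
    hu.fderiv_of_isOpen Metric.isOpen_ball (by norm_num)
  have hD2u := hDu.continuousOn_fderiv_of_isOpen Metric.isOpen_ball le_rfl
  have hdiff : ∀ θ, DifferentiableAt ℝ (fderiv ℝ u) (s • radialDir θ) := fun θ =>
    (hDu.differentiableOn one_ne_zero).differentiableAt
      (Metric.isOpen_ball.mem_nhds (smul_radialDir_mem_ball hs θ))
  have hint : ∀ v : ℝ → ℝ², Continuous v → IntervalIntegrable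
      (fun θ => fderiv ℝ (fderiv ℝ u) (s • radialDir θ) (v θ) (v θ)) volume (-π) π :=
    fun v hv => (((continuous_comp_smul_radialDir hD2u hs).clm_apply hv).clm_apply
      hv).intervalIntegrable _ _
  have hint' : IntervalIntegrable (fun θ => fderiv ℝ u (s • radialDir θ) (radialDir θ))
      volume (-π) π :=
    ((continuous_comp_smul_radialDir hDu.continuousOn hs).clm_apply
      continuous_radialDir).intervalIntegrable _ _
  have hradial : (fun t => t * ∫ θ in -π..π, fderiv ℝ u (t • radialDir θ) (radialDir θ)) =
      fun t => ∫ θ in -π..π, fderiv ℝ u (t • radialDir θ) (t • radialDir θ) := by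
    funext t
    simp only [← intervalIntegral.integral_const_mul, map_smul, smul_eq_mul]
  have hfderiv : ∀ θ, fderiv ℝ (fun x => fderiv ℝ u x x) (s • radialDir θ) (radialDir θ) =
      fderiv ℝ u (s • radialDir θ) (radialDir θ) +
        s * fderiv ℝ (fderiv ℝ u) (s • radialDir θ) (radialDir θ) (radialDir θ) := fun θ => by
    rw [fderiv_clm_apply (hdiff θ) differentiableAt_fun_id]
    simp [map_smul]
  have hlap : ∀ θ, lap2 u (s • radialDir θ) =
      fderiv ℝ (fderiv ℝ u) (s • radialDir θ) (radialDir θ) (radialDir θ) +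
        fderiv ℝ (fderiv ℝ u) (s • radialDir θ) (angularDir θ) (angularDir θ) := fun θ =>
    lap2_eq_radialDir_add_angularDir (hdiff θ) θ
  have hΨ : ContDiffOn ℝ 1 (fun x => fderiv ℝ u x x) (Metric.ball 0 R) :=
    hDu.clm_apply contDiffOn_id
  rw [hradial]
  refine (hasDerivAt_integral_comp_smul_radialDir hΨ hs).congr_deriv ?_
  simp only [hfderiv, hlap]
  rw [intervalIntegral.integral_add hint' ((hint _ continuous_radialDir).const_mul s),
    intervalIntegral.integral_add (hint _ continuous_radialDir) (hint _ continuous_angularDir),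
    integral_apply_radialDir_eq hDu hs, intervalIntegral.integral_const_mul]
  ring

theorem neg_mul_integral_le_integral_lap2 {u : ℝ² → ℝ} {c s R : ℝ}
    (hu : ContDiffOn ℝ 2 u (Metric.ball 0 R))
    (hineq : ∀ x ∈ Metric.ball (0 : ℝ²) R, -lap2 u x ≤ c * u x) (hs : |s| < R) :
    -(c * ∫ θ in -π..π, u (s • radialDir θ)) ≤ ∫ θ in -π..π, lap2 u (s • radialDir θ) := by
  have hint := (continuous_comp_smul_radialDir hu.continuousOn hs).intervalIntegrable
    (μ := volume) (-π) π
  rw [← intervalIntegral.integral_const_mul, ← intervalIntegral.integral_neg]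
  refine intervalIntegral.integral_mono_on (by linarith [pi_pos]) (hint.const_mul c).neg
    ((continuous_comp_smul_radialDir (continuousOn_lap2 hu Metric.isOpen_ball)
      hs).intervalIntegrable _ _) fun θ _ => ?_
  linarith [hineq _ (smul_radialDir_mem_ball hs θ)]

end DiskMean

end

open DiskMean

theorem stmt2_general (R c : ℝ) (hc : 0 < c)
    (u : EuclideanSpace ℝ (Fin 2) → ℝ)
    (hu : ContDiffOn ℝ 2 u (Metric.closedBall 0 R))
    (hupos : ∀ x ∈ Metric.closedBall (0 : EuclideanSpace ℝ (Fin 2)) R, 0 ≤ u x)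
    (hineq : ∀ x ∈ Metric.closedBall (0 : EuclideanSpace ℝ (Fin 2)) R,
      -lap2 u x ≤ c * u x)
    (f : ℝ → ℝ)
    (hf : ∀ r ∈ Set.Ioo (0:ℝ) R,
      f r = (1 / r ^ 2) * ∫ x in Metric.ball (0 : EuclideanSpace ℝ (Fin 2)) r, u x) :
    ∀ r ∈ Set.Ioo (0:ℝ) R, -(c * r / 2) * f r ≤ deriv f r := by
  intro r hr
  have hu' : ContDiffOn ℝ 2 u (Metric.ball 0 R) := hu.mono Metric.ball_subset_closedBall
  have hIco : Ico 0 R ⊆ Ioo (-R) R := fun s hs => ⟨by linarith [hs.1, hs.2], hs.2⟩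
  set S := fun s : ℝ => ∫ θ in -π..π, u (s • radialDir θ)
  set G := fun s : ℝ => ∫ t in 0..s, t * S t
  have hS : ∀ s ∈ Ioo (-R) R, HasDerivAt S
      (∫ θ in -π..π, fderiv ℝ u (s • radialDir θ) (radialDir θ)) s := fun s hs =>
    hasDerivAt_integral_comp_smul_radialDir (hu'.of_le one_le_two) (abs_lt.2 hs)
  have hG : ∀ s ∈ Ico 0 R, HasDerivAt G (s * S s) s := fun s hs =>
    hasDerivAt_integral_of_continuousOn isOpen_Ioo
      (fun t ht => (continuousAt_id.mul (hS t ht).continuousAt).continuousWithinAt)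
      (ordConnected_Ioo.uIcc_subset (hIco ⟨le_rfl, hs.1.trans_lt hs.2⟩) (hIco hs))
  have hfG : f =ᶠ[𝓝 r] fun t => G t / t ^ 2 := by
    filter_upwards [isOpen_Ioo.mem_nhds hr] with t ht
    rw [hf t ht, setIntegral_ball_eq_integral_polar ht.1.le
      (hu'.continuousOn.mono (Metric.closedBall_subset_ball ht.2)), one_div_mul_eq_div]
  rw [hfG.deriv_eq, hfG.eq_of_nhds]
  refine neg_mul_le_deriv_div_sq (fun s hs => hS s (hIco hs))
    (fun s hs => hasDerivAt_mul_integral_fderiv_radialDir hu' (abs_lt.2 (hIco hs))) hG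
    intervalIntegral.integral_same (fun s hs => ?_) (fun s hs => ?_) hc.le hr
  · rw [← mul_assoc, mul_comm c, mul_assoc, ← mul_neg]
    exact mul_le_mul_of_nonneg_left (neg_mul_integral_le_integral_lap2 hu'
      (fun x hx => hineq x (Metric.ball_subset_closedBall hx)) (abs_lt.2 (hIco hs))) hs.1
  · exact intervalIntegral.integral_nonneg (by linarith [pi_pos]) fun θ _ => hupos _
      (Metric.ball_subset_closedBall (smul_radialDir_mem_ball (abs_lt.2 (hIco hs)) θ))

/-- If `f(r) = (1/r²) ∫_{D_r} u` with `u` a nonnegative `C²` function satisfying `-Δu ≤ c·u`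
(Euclidean convention `Δ = div∇`), then `f'(r) ≥ -(c r/2) f(r)` on `(0,R)`. -/
theorem stmt2 (R c : ℝ) (hR : 0 < R) (hc : 0 < c)
    (u : EuclideanSpace ℝ (Fin 2) → ℝ)
    (hu : ContDiffOn ℝ 2 u (Metric.closedBall 0 R))
    (hupos : ∀ x ∈ Metric.closedBall (0 : EuclideanSpace ℝ (Fin 2)) R, 0 ≤ u x)
    (hineq : ∀ x ∈ Metric.closedBall (0 : EuclideanSpace ℝ (Fin 2)) R,
      -lap2 u x ≤ c * u x)
    (f : ℝ → ℝ)
    (hf : ∀ r ∈ Set.Ioo (0:ℝ) R,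
      f r = (1 / r ^ 2) * ∫ x in Metric.ball (0 : EuclideanSpace ℝ (Fin 2)) r, u x) :
    ∀ r ∈ Set.Ioo (0:ℝ) R, -(c * r / 2) * f r ≤ deriv f r :=
  stmt2_general R c hc u hu hupos hineq f hf
end

section
/- Define s : ℝ^k∖{0} → ℝ^k∖{0} by s(x)ᵢ = e^{2σᵢ t(x)} xᵢ, where t(x) is the unique real with ∑ᵢ σᵢ e^{2σᵢ t(x)} xᵢ² = 1. Then s is an involution: s(s(x)) = x for all x ≠ 0, and t(s(x)) = -t(x). -/
open Real

theorem exp_mul_ne_zero_of_ne_zero {ι : Type*} (c x : ι → ℝ) (hx : x ≠ 0) :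
    (fun i => exp (c i) * x i) ≠ 0 := by
  contrapose! hx
  funext i
  simpa [exp_ne_zero] using congrFun hx i

theorem sum_mul_exp_mul_sq_exp_mul {ι : Type*} [Fintype ι] (σ x : ι → ℝ) (t u : ℝ) :
    ∑ i, σ i * exp (2 * σ i * u) * (exp (2 * σ i * t) * x i) ^ 2
      = ∑ i, σ i * exp (2 * σ i * (u + 2 * t)) * x i ^ 2 := by
  refine Finset.sum_congr rfl fun i _ => ?_
  rw [mul_pow, ← exp_nat_mul, mul_add, exp_add]
  ring_nf

theorem stmt5_general (k : ℕ) (σ : Fin k → ℝ)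
    (t : (Fin k → ℝ) → ℝ)
    (ht : ∀ x : Fin k → ℝ, x ≠ 0 →
      ∑ i, σ i * Real.exp (2 * σ i * t x) * (x i) ^ 2 = 1)
    (htuniq : ∀ x : Fin k → ℝ, x ≠ 0 → ∀ t' : ℝ,
      (∑ i, σ i * Real.exp (2 * σ i * t') * (x i) ^ 2 = 1) → t' = t x)
    (s : (Fin k → ℝ) → (Fin k → ℝ))
    (hs : ∀ x i, s x i = Real.exp (2 * σ i * t x) * x i)
    (x : Fin k → ℝ) (hx : x ≠ 0) :
    s (s x) = x ∧ t (s x) = -t x := by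
  have hsx : s x = fun i => exp (2 * σ i * t x) * x i := funext (hs x)
  have hsx_ne : s x ≠ 0 := hsx ▸ exp_mul_ne_zero_of_ne_zero _ x hx
  -- `-t x` solves the defining equation at `s x`, since `-t x + 2 t x = t x`.
  have hts : t (s x) = -t x := by
    refine (htuniq (s x) hsx_ne (-t x) ?_).symm
    rw [hsx, sum_mul_exp_mul_sq_exp_mul, neg_add_eq_sub, two_mul, add_sub_cancel_right]
    exact ht x hx
  refine ⟨funext fun i => ?_, hts⟩
  rw [hs, hts, hs, ← mul_assoc, ← exp_add, mul_neg, neg_add_cancel, exp_zero, one_mul]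

/-- With `t(x)` the unique real such that `∑ᵢ σᵢ e^{2σᵢ t(x)} xᵢ² = 1` and
`s(x)ᵢ = e^{2σᵢ t(x)} xᵢ`, the map `s` is an involution on `ℝ^k ∖ {0}` and
`t(s(x)) = -t(x)`. -/
theorem stmt5 (k : ℕ) (σ : Fin k → ℝ) (hσ : ∀ i, 0 < σ i)
    (t : (Fin k → ℝ) → ℝ)
    (ht : ∀ x : Fin k → ℝ, x ≠ 0 →
      ∑ i, σ i * Real.exp (2 * σ i * t x) * (x i) ^ 2 = 1)
    (htuniq : ∀ x : Fin k → ℝ, x ≠ 0 → ∀ t' : ℝ,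
      (∑ i, σ i * Real.exp (2 * σ i * t') * (x i) ^ 2 = 1) → t' = t x)
    (s : (Fin k → ℝ) → (Fin k → ℝ))
    (hs : ∀ x i, s x i = Real.exp (2 * σ i * t x) * x i)
    (x : Fin k → ℝ) (hx : x ≠ 0) :
    s (s x) = x ∧ t (s x) = -t x :=
  stmt5_general k σ t ht htuniq s hs x hx
end
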